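/- arXiv:1310.4851 — 2 statements merged into one kernel-verified Lean document; each statement's English description precedes it below -/
import Mathlib

section
/- Let f : I → ℝ be a differentiable function on the interior I° of a real interval I ⊂ (0,∞), let a, b ∈ I with a < b, and suppose f′ is integrable on [a,b]. If |f′|^q is harmonically convex on [a,b] for some q > 1 with 1/p + 1/q = 1, then: |f(2ab/(a+b)) − (ab/(b−a))·∫_a^b f(x)/x² dx| ≤ (ab(b−a)/2)·{ C₁(0,p;a,b)^{1/p}·( (|f′(2ab/(a+b))|^q + |f′(b)|^q)/4 )^{1/q} + C₁(0,p;b,a)^{1/p}·( (|f′(2ab/(a+b))|^q + |f′(a)|^q)/4 )^{1/q} }. -/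
open MeasureTheory Set

/-- A function `g` is harmonically convex on `s` if
`g (x*y/(t*x+(1-t)*y)) ≤ t * g y + (1-t) * g x` for all `x y ∈ s`, `t ∈ [0,1]`. -/
def HarmonicallyConvexOn (s : Set ℝ) (g : ℝ → ℝ) : Prop :=
  ∀ x ∈ s, ∀ y ∈ s, ∀ t ∈ Icc (0:ℝ) 1,
    g (x * y / (t * x + (1 - t) * y)) ≤ t * g y + (1 - t) * g x

/-- `C₁(λ, p; u, ϑ) = ∫_0^{1/2} |λ-2t|^p / (tϑ+(1-t)u)^{2p} dt` from Theorem 2.3. -/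
noncomputable def C1p (lam p u v : ℝ) : ℝ :=
  ∫ t in (0:ℝ)..(1/2 : ℝ), |lam - 2 * t| ^ p / (t * v + (1 - t) * u) ^ (2 * p)

/-!
The substitution `x = ab / (ta + (1 - t)b)` turns `(ab / (b - a)) ∫_a^b f(x) / x² dx` into
`∫_0^1 f(x(t)) dt`, and integrating by parts against the kernel `t` on `[0, 1/2]` and `t - 1` on
`[1/2, 1]` writes `f(x(1/2)) - ∫_0^1 f(x(t)) dt` as an integral of `(f ∘ x)'`. The reflection
`t ↦ 1 - t` exchanges `a` and `b`, so both halves are the same estimate on `[0, 1/2]`: Hölder's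
inequality splits off the weight `2t / (ta + (1 - t)b)²`, whose `p`-th power integrates to `C₁`,
and harmonic convexity along the harmonic segment from `a` to `2ab / (a + b)` gives
`|f'(x(t))|^q ≤ 2t |f'(2ab / (a + b))|^q + (1 - 2t) |f'(a)|^q`, whose integral over `[0, 1/2]`
is a quarter of the sum of the two endpoint values.
-/

/-- `t ↦ 1 / harmonicInterp u v t` is the affine path from `1 / u` to `1 / v`. -/
noncomputable def harmonicInterp (u v t : ℝ) : ℝ := u * v / (t * u + (1 - t) * v)

section harmonicInterp

variable {u v t : ℝ}

lemma min_le_mul_add_one_sub_mul (ht : t ∈ Icc (0:ℝ) 1) : min u v ≤ t * u + (1 - t) * v := by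
  nlinarith [mul_le_mul_of_nonneg_left (min_le_left u v) ht.1,
    mul_le_mul_of_nonneg_left (min_le_right u v) (sub_nonneg.2 ht.2)]

lemma mul_add_one_sub_mul_pos (hu : 0 < u) (hv : 0 < v) (ht : t ∈ Icc (0:ℝ) 1) :
    0 < t * u + (1 - t) * v :=
  (lt_min hu hv).trans_le (min_le_mul_add_one_sub_mul ht)

lemma harmonicInterp_zero (hv : v ≠ 0) : harmonicInterp u v 0 = u := by
  simp [harmonicInterp, hv]

lemma harmonicInterp_one (hu : u ≠ 0) : harmonicInterp u v 1 = v := by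
  simp [harmonicInterp, hu]

lemma harmonicInterp_half (h : u + v ≠ 0) : harmonicInterp u v (1 / 2) = 2 * u * v / (u + v) := by
  have hD : 1 / 2 * u + (1 - 1 / 2) * v ≠ 0 := by contrapose! h; linarith
  rw [harmonicInterp, div_eq_div_iff hD h]
  ring

lemma harmonicInterp_one_sub : harmonicInterp u v (1 - t) = harmonicInterp v u t := by
  simp only [harmonicInterp]
  ring

lemma harmonicInterp_harmonicInterp {r s : ℝ} (hu : u ≠ 0) (hD : s * u + (1 - s) * v ≠ 0) :
    harmonicInterp u (harmonicInterp u v s) r = harmonicInterp u v (r * s) := by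
  have hden : r * u + (1 - r) * harmonicInterp u v s =
      u * (r * s * u + (1 - r * s) * v) / (s * u + (1 - s) * v) := by
    rw [eq_div_iff hD, harmonicInterp, add_mul, mul_assoc (1 - r), div_mul_cancel₀ _ hD]
    ring
  rw [harmonicInterp, hden, harmonicInterp, mul_div_assoc', div_div_div_cancel_right₀ hD,
    mul_div_mul_left _ _ hu, harmonicInterp]

lemma harmonicInterp_mem_Icc (hu : 0 < u) (huv : u ≤ v) (ht : t ∈ Icc (0:ℝ) 1) :
    harmonicInterp u v t ∈ Icc u v := by
  have hD := mul_add_one_sub_mul_pos hu (hu.trans_le huv) ht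
  have h1 : u ≤ t * u + (1 - t) * v := by nlinarith [ht.2]
  have h2 : t * u + (1 - t) * v ≤ v := by nlinarith [ht.1]
  constructor
  · rw [harmonicInterp, le_div_iff₀ hD]; nlinarith
  · rw [harmonicInterp, div_le_iff₀ hD]; nlinarith

lemma harmonicInterp_mem_uIcc (hu : 0 < u) (hv : 0 < v) (ht : t ∈ Icc (0:ℝ) 1) :
    harmonicInterp u v t ∈ uIcc u v := by
  rcases le_total u v with huv | hvu
  · exact uIcc_of_le huv ▸ harmonicInterp_mem_Icc hu huv ht
  · rw [← harmonicInterp_one_sub, uIcc_of_ge hvu]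
    exact harmonicInterp_mem_Icc hv hvu ⟨by linarith [ht.2], by linarith [ht.1]⟩

lemma harmonicInterp_mem_Ioo (hu : 0 < u) (huv : u < v) (ht : t ∈ Ioo (0:ℝ) 1) :
    harmonicInterp u v t ∈ Ioo u v := by
  have hD := mul_add_one_sub_mul_pos hu (hu.trans huv) (Ioo_subset_Icc_self ht)
  have h1 : u < t * u + (1 - t) * v := by nlinarith [ht.2]
  have h2 : t * u + (1 - t) * v < v := by nlinarith [ht.1]
  constructor
  · rw [harmonicInterp, lt_div_iff₀ hD]; nlinarith
  · rw [harmonicInterp, div_lt_iff₀ hD]; nlinarith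

lemma hasDerivAt_harmonicInterp (h : t * u + (1 - t) * v ≠ 0) :
    HasDerivAt (harmonicInterp u v) (u * v * (v - u) / (t * u + (1 - t) * v) ^ 2) t := by
  have hD : HasDerivAt (fun s => s * u + (1 - s) * v) (u - v) t := by
    have hlin : (fun s => s * u + (1 - s) * v) = fun s => s * (u - v) + v := by funext s; ring
    simpa [hlin] using ((hasDerivAt_id t).mul_const (u - v)).add_const v
  exact ((hasDerivAt_const t (u * v)).div hD h).congr_deriv (by ring)

lemma measurable_harmonicInterp : Measurable (harmonicInterp u v) := by
  unfold harmonicInterp; fun_prop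

lemma monotoneOn_harmonicInterp (hu : 0 < u) (huv : u ≤ v) :
    MonotoneOn (harmonicInterp u v) (Icc 0 1) := by
  intro s hs t ht hst
  have hDs := mul_add_one_sub_mul_pos hu (hu.trans_le huv) hs
  have hDt := mul_add_one_sub_mul_pos hu (hu.trans_le huv) ht
  exact div_le_div_of_nonneg_left (mul_pos hu (hu.trans_le huv)).le hDt (by nlinarith)

lemma image_harmonicInterp_Ioo (hu : 0 < u) (huv : u < v) :
    harmonicInterp u v '' Ioo 0 1 = Ioo u v := by
  refine Subset.antisymm (image_subset_iff.2 fun t ht => harmonicInterp_mem_Ioo hu huv ht) ?_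
  have hcont : ContinuousOn (harmonicInterp u v) (Icc 0 1) := fun t ht =>
    (hasDerivAt_harmonicInterp (mul_add_one_sub_mul_pos hu (hu.trans huv) ht).ne').continuousAt
      |>.continuousWithinAt
  simpa [harmonicInterp_zero (hu.trans huv).ne', harmonicInterp_one hu.ne'] using
    intermediate_value_Ioo zero_le_one hcont

end harmonicInterp

lemma integral_two_mul_add_one_sub_two_mul (M U : ℝ) :
    ∫ t in (0:ℝ)..1 / 2, (2 * t * M + (1 - 2 * t) * U) = (M + U) / 4 := by
  have h : (fun t : ℝ => 2 * t * M + (1 - 2 * t) * U) = fun t => t * (2 * (M - U)) + U := by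
    funext t; ring
  rw [h, intervalIntegral.integral_add (intervalIntegral.intervalIntegrable_id.mul_const _)
    intervalIntegrable_const, intervalIntegral.integral_mul_const, integral_id,
    intervalIntegral.integral_const]
  norm_num
  ring

section HarmonicallyConvexOn

variable {G : ℝ → ℝ} {u v t : ℝ}

lemma HarmonicallyConvexOn.apply_harmonicInterp_le (hG : HarmonicallyConvexOn (uIcc u v) G)
    (hu : 0 < u) (hv : 0 < v) (ht : t ∈ Icc (0:ℝ) (1 / 2)) :
    G (harmonicInterp u v t) ≤ 2 * t * G (harmonicInterp u v (1 / 2)) + (1 - 2 * t) * G u := by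
  have h := hG u left_mem_uIcc _
    (harmonicInterp_mem_uIcc hu hv (by norm_num : (1 / 2 : ℝ) ∈ Icc 0 1)) (2 * t)
    ⟨by linarith [ht.1], by linarith [ht.2]⟩
  change G (harmonicInterp u _ (2 * t)) ≤ _ at h
  rwa [harmonicInterp_harmonicInterp hu.ne'
    (mul_add_one_sub_mul_pos hu hv (by norm_num : (1 / 2 : ℝ) ∈ Icc 0 1)).ne',
    show 2 * t * (1 / 2) = t by ring] at h

lemma HarmonicallyConvexOn.apply_harmonicInterp_le_add (hG : HarmonicallyConvexOn (uIcc u v) G)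
    (hu : 0 < u) (hv : 0 < v) (hG0 : ∀ x ∈ uIcc u v, 0 ≤ G x) (ht : t ∈ Icc (0:ℝ) (1 / 2)) :
    G (harmonicInterp u v t) ≤ G (harmonicInterp u v (1 / 2)) + G u := by
  have hM := hG0 _ (harmonicInterp_mem_uIcc hu hv (by norm_num : (1 / 2 : ℝ) ∈ Icc 0 1))
  have hU := hG0 u left_mem_uIcc
  nlinarith [hG.apply_harmonicInterp_le hu hv ht, ht.1, ht.2]

lemma HarmonicallyConvexOn.integral_comp_harmonicInterp_le
    (hG : HarmonicallyConvexOn (uIcc u v) G) (hu : 0 < u) (hv : 0 < v)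
    (hG0 : ∀ x ∈ uIcc u v, 0 ≤ G x)
    (hmeas : AEStronglyMeasurable (fun t => G (harmonicInterp u v t))
      (volume.restrict (Ioc 0 (1 / 2)))) :
    ∫ t in (0:ℝ)..1 / 2, G (harmonicInterp u v t) ≤
      (G (harmonicInterp u v (1 / 2)) + G u) / 4 := by
  have hint : IntervalIntegrable (fun t => G (harmonicInterp u v t)) volume 0 (1 / 2) := by
    rw [intervalIntegrable_iff_integrableOn_Ioc_of_le (by norm_num)]
    refine Integrable.of_bound hmeas (G (harmonicInterp u v (1 / 2)) + G u) ?_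
    filter_upwards [ae_restrict_mem measurableSet_Ioc] with t ht
    have ht' : t ∈ Icc (0:ℝ) (1 / 2) := Ioc_subset_Icc_self ht
    rw [Real.norm_of_nonneg (hG0 _ (harmonicInterp_mem_uIcc hu hv ⟨ht'.1, by linarith [ht'.2]⟩))]
    exact hG.apply_harmonicInterp_le_add hu hv hG0 ht'
  calc ∫ t in (0:ℝ)..1 / 2, G (harmonicInterp u v t)
      ≤ ∫ t in (0:ℝ)..1 / 2,
          (2 * t * G (harmonicInterp u v (1 / 2)) + (1 - 2 * t) * G u) :=
        intervalIntegral.integral_mono_on (by norm_num) hint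
          ((by fun_prop : Continuous _).intervalIntegrable _ _)
          fun t ht => hG.apply_harmonicInterp_le hu hv ht
    _ = (G (harmonicInterp u v (1 / 2)) + G u) / 4 := integral_two_mul_add_one_sub_two_mul _ _

end HarmonicallyConvexOn

lemma intervalIntegral_mul_le_rpow_mul_rpow {p q a b C D : ℝ} (hpq : p.HolderConjugate q)
    (hab : a ≤ b) {φ ψ : ℝ → ℝ}
    (hφm : AEStronglyMeasurable φ (volume.restrict (Ioc a b)))
    (hψm : AEStronglyMeasurable ψ (volume.restrict (Ioc a b)))
    (hφ : ∀ t ∈ Ioc a b, φ t ∈ Icc 0 C) (hψ : ∀ t ∈ Ioc a b, ψ t ∈ Icc 0 D) :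
    ∫ t in a..b, φ t * ψ t ≤
      (∫ t in a..b, φ t ^ p) ^ (1 / p) * (∫ t in a..b, ψ t ^ q) ^ (1 / q) := by
  have hmem := ae_restrict_mem (μ := volume) (measurableSet_Ioc (a := a) (b := b))
  simp only [intervalIntegral.integral_of_le hab]
  refine integral_mul_le_Lp_mul_Lq_of_nonneg hpq ?_ ?_ (.of_bound hφm C ?_) (.of_bound hψm D ?_)
  all_goals filter_upwards [hmem] with t ht
  · exact (hφ t ht).1
  · exact (hψ t ht).1
  · rw [Real.norm_of_nonneg (hφ t ht).1]; exact (hφ t ht).2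
  · rw [Real.norm_of_nonneg (hψ t ht).1]; exact (hψ t ht).2

lemma C1p_zero_eq {p u v : ℝ} (hu : 0 < u) (hv : 0 < v) :
    C1p 0 p v u = ∫ t in (0:ℝ)..1 / 2, (2 * t / (t * u + (1 - t) * v) ^ 2) ^ p := by
  refine intervalIntegral.integral_congr fun t ht => ?_
  rw [uIcc_of_le (by norm_num)] at ht
  have h2t : 0 ≤ 2 * t := by linarith [ht.1]
  have hD := mul_add_one_sub_mul_pos hu hv ⟨ht.1, by linarith [ht.2]⟩
  rw [Real.div_rpow h2t (sq_nonneg _), zero_sub, abs_neg, abs_of_nonneg h2t, ← Real.rpow_natCast,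
    ← Real.rpow_mul hD.le]
  norm_num

theorem integral_mul_abs_comp_harmonicInterp_div_sq_le {p q u v : ℝ} (hpq : p.HolderConjugate q)
    (hu : 0 < u) (hv : 0 < v) {g : ℝ → ℝ}
    (hconv : HarmonicallyConvexOn (uIcc u v) (fun x => |g x| ^ q))
    (hmeas : AEStronglyMeasurable (fun t => g (harmonicInterp u v t))
      (volume.restrict (Ioc 0 (1 / 2)))) :
    ∫ t in (0:ℝ)..1 / 2, t * |g (harmonicInterp u v t)| / (t * u + (1 - t) * v) ^ 2 ≤
      1 / 2 * (C1p 0 p v u ^ (1 / p) *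
        ((|g (harmonicInterp u v (1 / 2))| ^ q + |g u| ^ q) / 4) ^ (1 / q)) := by
  have hq := hpq.symm.pos
  have hG0 : ∀ x ∈ uIcc u v, 0 ≤ |g x| ^ q := fun x _ => by positivity
  have hψm : AEStronglyMeasurable (fun t => |g (harmonicInterp u v t)|)
      (volume.restrict (Ioc 0 (1 / 2))) := by
    simpa only [Real.norm_eq_abs] using hmeas.norm
  have hψq := hconv.integral_comp_harmonicInterp_le hu hv hG0
    ((Real.continuous_rpow_const hq.le).comp_aestronglyMeasurable hψm)
  have hψ : ∀ t ∈ Ioc (0:ℝ) (1 / 2), |g (harmonicInterp u v t)| ∈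
      Icc 0 ((|g (harmonicInterp u v (1 / 2))| ^ q + |g u| ^ q) ^ q⁻¹) := fun t ht =>
    ⟨abs_nonneg _, (Real.le_rpow_inv_iff_of_pos (abs_nonneg _) (by positivity) hq).2
      (hconv.apply_harmonicInterp_le_add hu hv hG0 (Ioc_subset_Icc_self ht))⟩
  have hφ : ∀ t ∈ Ioc (0:ℝ) (1 / 2), 2 * t / (t * u + (1 - t) * v) ^ 2 ∈
      Icc 0 (1 / min u v ^ 2) := fun t ht => by
    have ht' : t ∈ Icc (0:ℝ) 1 := ⟨ht.1.le, by linarith [ht.2]⟩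
    refine ⟨div_nonneg (by linarith [ht.1]) (sq_nonneg _),
      div_le_div₀ zero_le_one (by linarith [ht.2]) (pow_pos (lt_min hu hv) 2)
        (pow_le_pow_left₀ (lt_min hu hv).le (min_le_mul_add_one_sub_mul ht') 2)⟩
  have hC : 0 ≤ C1p 0 p v u := by
    rw [C1p_zero_eq hu hv]
    refine intervalIntegral.integral_nonneg (by norm_num) fun t ht => ?_
    exact Real.rpow_nonneg (div_nonneg (by linarith [ht.1]) (sq_nonneg _)) p
  calc ∫ t in (0:ℝ)..1 / 2, t * |g (harmonicInterp u v t)| / (t * u + (1 - t) * v) ^ 2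
      = 1 / 2 * ∫ t in (0:ℝ)..1 / 2,
          2 * t / (t * u + (1 - t) * v) ^ 2 * |g (harmonicInterp u v t)| := by
        rw [← intervalIntegral.integral_const_mul]
        congr 1; funext t; ring
    _ ≤ 1 / 2 * ((∫ t in (0:ℝ)..1 / 2, (2 * t / (t * u + (1 - t) * v) ^ 2) ^ p) ^ (1 / p) *
          (∫ t in (0:ℝ)..1 / 2, |g (harmonicInterp u v t)| ^ q) ^ (1 / q)) := by
        gcongr
        exact intervalIntegral_mul_le_rpow_mul_rpow hpq (by norm_num)
          (by fun_prop : Measurable fun t => 2 * t / (t * u + (1 - t) * v) ^ 2).aestronglyMeasurable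
          hψm hφ hψ
    _ ≤ _ := by
        rw [← C1p_zero_eq hu hv]
        gcongr
        exact intervalIntegral.integral_nonneg (by norm_num) fun t _ => by positivity

lemma apply_half_sub_integral_eq_of_continuousOn {G g : ℝ → ℝ} (hG : ContinuousOn G (Icc 0 1))
    (hG' : ∀ t ∈ Ioo (0:ℝ) 1, HasDerivAt G (g t) t) (hg : IntervalIntegrable g volume 0 1) :
    G (1 / 2) - ∫ t in (0:ℝ)..1, G t =
      (∫ t in (0:ℝ)..1 / 2, t * g t) + ∫ t in (1 / 2 : ℝ)..1, (t - 1) * g t := by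
  have h12 : (1 / 2 : ℝ) ∈ uIcc 0 1 := by rw [uIcc_of_le zero_le_one]; norm_num
  have hI₁ : uIcc (0:ℝ) (1 / 2) ⊆ uIcc 0 1 := uIcc_subset_uIcc left_mem_uIcc h12
  have hI₂ : uIcc (1 / 2 : ℝ) 1 ⊆ uIcc 0 1 := uIcc_subset_uIcc h12 right_mem_uIcc
  have hG₀ : ContinuousOn G (uIcc 0 1) := by rwa [uIcc_of_le zero_le_one]
  have hO₁ : Ioo (min (0:ℝ) (1 / 2)) (max 0 (1 / 2)) ⊆ Ioo 0 1 := by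
    rw [min_eq_left (by norm_num), max_eq_right (by norm_num)]
    exact Ioo_subset_Ioo_right (by norm_num)
  have hO₂ : Ioo (min (1 / 2 : ℝ) 1) (max (1 / 2) 1) ⊆ Ioo 0 1 := by
    rw [min_eq_left (by norm_num), max_eq_right (by norm_num)]
    exact Ioo_subset_Ioo_left (by norm_num)
  have h₁ := intervalIntegral.integral_mul_deriv_eq_deriv_mul_of_hasDerivAt (u := id)
    (u' := fun _ => 1) continuousOn_id (hG₀.mono hI₁) (fun t _ => hasDerivAt_id t)
    (fun t ht => hG' t (hO₁ ht)) intervalIntegrable_const (hg.mono_set hI₁)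
  have h₂ := intervalIntegral.integral_mul_deriv_eq_deriv_mul_of_hasDerivAt (u := fun t => t - 1)
    (u' := fun _ => 1) (by fun_prop) (hG₀.mono hI₂) (fun t _ => (hasDerivAt_id t).sub_const 1)
    (fun t ht => hG' t (hO₂ ht)) intervalIntegrable_const (hg.mono_set hI₂)
  rw [← intervalIntegral.integral_add_adjacent_intervals (hG₀.mono hI₁).intervalIntegrable
    (hG₀.mono hI₂).intervalIntegrable]
  simp only [id, one_mul] at h₁ h₂
  rw [h₁, h₂]
  ring

/-- Only the values of `F` on `(0, 1)` matter; there it is a primitive of the integrable `g`, so it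
extends continuously to `[0, 1]`. -/
lemma apply_half_sub_integral_eq {F g : ℝ → ℝ} (hF : ∀ t ∈ Ioo (0:ℝ) 1, HasDerivAt F (g t) t)
    (hg : IntervalIntegrable g volume 0 1) :
    F (1 / 2) - ∫ t in (0:ℝ)..1, F t =
      (∫ t in (0:ℝ)..1 / 2, t * g t) + ∫ t in (1 / 2 : ℝ)..1, (t - 1) * g t := by
  have h12 : (1 / 2 : ℝ) ∈ uIcc 0 1 := by rw [uIcc_of_le zero_le_one]; norm_num
  set G : ℝ → ℝ := fun t => F (1 / 2) + ∫ s in (1 / 2 : ℝ)..t, g s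
  have hGF : EqOn G F (Ioo 0 1) := fun t ht => by
    have hsub : uIcc (1 / 2) t ⊆ Ioo (0:ℝ) 1 := ordConnected_Ioo.uIcc_subset (by norm_num) ht
    simp only [G]
    rw [intervalIntegral.integral_eq_sub_of_hasDerivAt (fun s hs => hF s (hsub hs))
      (hg.mono_set (hsub.trans (uIcc_of_le (zero_le_one' ℝ) ▸ Ioo_subset_Icc_self)))]
    ring
  have hG : ContinuousOn G (Icc 0 1) := by
    have := (continuousOn_const (c := F (1 / 2))).add
      (intervalIntegral.continuousOn_primitive_interval' hg h12)
    rwa [uIcc_of_le zero_le_one] at this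
  have hG' : ∀ t ∈ Ioo (0:ℝ) 1, HasDerivAt G (g t) t := fun t ht =>
    (hF t ht).congr_of_eventuallyEq (Filter.eventuallyEq_of_mem (isOpen_Ioo.mem_nhds ht) hGF)
  have hint : ∫ t in (0:ℝ)..1, G t = ∫ t in (0:ℝ)..1, F t := by
    simp only [intervalIntegral.integral_of_le zero_le_one, integral_Ioc_eq_integral_Ioo]
    exact setIntegral_congr_fun measurableSet_Ioo hGF
  have h := apply_half_sub_integral_eq_of_continuousOn hG hG' hg
  rwa [hint, show G (1 / 2) = F (1 / 2) by simp [G]] at h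

section HarmonicSubstitution

variable {a b : ℝ}

lemma hasDerivWithinAt_harmonicInterp_Ioo (ha : 0 < a) (hab : a < b) :
    ∀ t ∈ Ioo (0:ℝ) 1, HasDerivWithinAt (harmonicInterp a b)
      (a * b * (b - a) / (t * a + (1 - t) * b) ^ 2) (Ioo 0 1) t := fun _ ht =>
  (hasDerivAt_harmonicInterp
    (mul_add_one_sub_mul_pos ha (ha.trans hab) (Ioo_subset_Icc_self ht)).ne').hasDerivWithinAt

theorem integral_div_sq_eq_integral_harmonicInterp (ha : 0 < a) (hab : a < b) (g : ℝ → ℝ) :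
    ∫ x in a..b, g x / x ^ 2 = (b - a) / (a * b) * ∫ t in (0:ℝ)..1, g (harmonicInterp a b t) := by
  rw [intervalIntegral.integral_of_le hab.le, integral_Ioc_eq_integral_Ioo,
    ← image_harmonicInterp_Ioo ha hab,
    integral_image_eq_integral_deriv_smul_of_monotoneOn measurableSet_Ioo
      (hasDerivWithinAt_harmonicInterp_Ioo ha hab)
      ((monotoneOn_harmonicInterp ha hab.le).mono Ioo_subset_Icc_self),
    intervalIntegral.integral_of_le zero_le_one, integral_Ioc_eq_integral_Ioo,
    ← integral_const_mul]
  refine setIntegral_congr_fun measurableSet_Ioo fun t ht => ?_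
  have hD := (mul_add_one_sub_mul_pos ha (ha.trans hab) (Ioo_subset_Icc_self ht)).ne'
  have := ha.ne'
  have := (ha.trans hab).ne'
  simp only [smul_eq_mul, harmonicInterp]
  generalize t * a + (1 - t) * b = D at hD ⊢
  field_simp

lemma IntervalIntegrable.comp_harmonicInterp_mul_deriv (ha : 0 < a) (hab : a < b) {g : ℝ → ℝ}
    (hg : IntervalIntegrable g volume a b) :
    IntervalIntegrable
      (fun t => g (harmonicInterp a b t) * (a * b * (b - a) / (t * a + (1 - t) * b) ^ 2))
      volume 0 1 := by
  rw [intervalIntegrable_iff_integrableOn_Ioo_of_le zero_le_one]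
  have h := (integrableOn_image_iff_integrableOn_deriv_smul_of_monotoneOn measurableSet_Ioo
    (hasDerivWithinAt_harmonicInterp_Ioo ha hab)
    ((monotoneOn_harmonicInterp ha hab.le).mono Ioo_subset_Icc_self) g).1
    (by rw [image_harmonicInterp_Ioo ha hab]
        exact (intervalIntegrable_iff_integrableOn_Ioo_of_le hab.le).1 hg)
  simpa only [smul_eq_mul, mul_comm] using h

end HarmonicSubstitution

section MidpointIdentity

variable {a b : ℝ} {f f' : ℝ → ℝ}

theorem apply_harmonicMean_sub_integral_eq (ha : 0 < a) (hab : a < b)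
    (hf : ∀ x ∈ Ioo a b, HasDerivAt f (f' x) x) (hf' : IntervalIntegrable f' volume a b) :
    f (2 * a * b / (a + b)) - a * b / (b - a) * ∫ x in a..b, f x / x ^ 2 =
      (∫ t in (0:ℝ)..1 / 2,
          t * (f' (harmonicInterp a b t) * (a * b * (b - a) / (t * a + (1 - t) * b) ^ 2))) +
        ∫ t in (1 / 2 : ℝ)..1,
          (t - 1) *
            (f' (harmonicInterp a b t) * (a * b * (b - a) / (t * a + (1 - t) * b) ^ 2)) := by
  have hF : ∀ t ∈ Ioo (0:ℝ) 1, HasDerivAt (fun t => f (harmonicInterp a b t))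
      (f' (harmonicInterp a b t) * (a * b * (b - a) / (t * a + (1 - t) * b) ^ 2)) t :=
    fun t ht => (hf _ (harmonicInterp_mem_Ioo ha hab ht)).comp t (hasDerivAt_harmonicInterp
      (mul_add_one_sub_mul_pos ha (ha.trans hab) (Ioo_subset_Icc_self ht)).ne')
  have hcancel : a * b / (b - a) * ((b - a) / (a * b)) = 1 := by
    have := ha.ne'; have := (ha.trans hab).ne'; have := (sub_pos.2 hab).ne'
    field_simp
  rw [← apply_half_sub_integral_eq hF (hf'.comp_harmonicInterp_mul_deriv ha hab),
    integral_div_sq_eq_integral_harmonicInterp ha hab, ← mul_assoc, hcancel, one_mul,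
    harmonicInterp_half (by linarith)]

theorem abs_apply_harmonicMean_sub_integral_le (ha : 0 < a) (hab : a < b)
    (hf : ∀ x ∈ Ioo a b, HasDerivAt f (f' x) x) (hf' : IntervalIntegrable f' volume a b) :
    |f (2 * a * b / (a + b)) - a * b / (b - a) * ∫ x in a..b, f x / x ^ 2| ≤
      a * b * (b - a) *
        ((∫ t in (0:ℝ)..1 / 2, t * |f' (harmonicInterp a b t)| / (t * a + (1 - t) * b) ^ 2) +
          ∫ t in (0:ℝ)..1 / 2, t * |f' (harmonicInterp b a t)| / (t * b + (1 - t) * a) ^ 2) := by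
  have hK : 0 ≤ a * b * (b - a) := mul_nonneg (mul_pos ha (ha.trans hab)).le (sub_pos.2 hab).le
  have habs : ∀ s x D : ℝ, |s * (f' x * (a * b * (b - a) / D ^ 2))| =
      a * b * (b - a) * (|s| * |f' x| / D ^ 2) := fun s x D => by
    rw [abs_mul, abs_mul, abs_of_nonneg (div_nonneg hK (sq_nonneg D))]
    ring
  rw [apply_harmonicMean_sub_integral_eq ha hab hf hf', mul_add,
    ← intervalIntegral.integral_const_mul, ← intervalIntegral.integral_const_mul]
  refine (abs_add_le _ _).trans (add_le_add ?_ ?_)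
  · refine (intervalIntegral.abs_integral_le_integral_abs (by norm_num)).trans_eq
      (intervalIntegral.integral_congr fun t ht => ?_)
    rw [uIcc_of_le (by norm_num)] at ht
    simp only [habs, abs_of_nonneg ht.1]
  · refine (intervalIntegral.abs_integral_le_integral_abs (by norm_num)).trans_eq ?_
    -- reflect `[1/2, 1]` onto `[0, 1/2]` by `t ↦ 1 - t`, which swaps the roles of `a` and `b`
    have hrefl : ∀ h : ℝ → ℝ, ∫ t in (1 / 2 : ℝ)..1, h t = ∫ t in (0:ℝ)..1 / 2, h (1 - t) :=
      fun h => by rw [intervalIntegral.integral_comp_sub_left]; norm_num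
    rw [hrefl]
    refine intervalIntegral.integral_congr fun t ht => ?_
    rw [uIcc_of_le (by norm_num)] at ht
    simp only [habs, harmonicInterp_one_sub, sub_sub_cancel_left, abs_neg, abs_of_nonneg ht.1,
      show (1 - t) * a + (1 - (1 - t)) * b = t * b + (1 - t) * a by ring]

/-- `f'` is an arbitrary function, but on `s` it agrees with the measurable function `deriv f`. -/
lemma aestronglyMeasurable_comp_of_hasDerivAt {f f' φ : ℝ → ℝ} {s : Set ℝ} {μ : Measure ℝ}
    (hf : ∀ x ∈ s, HasDerivAt f (f' x) x) (hφ : Measurable φ) (hφs : ∀ᵐ t ∂μ, φ t ∈ s) :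
    AEStronglyMeasurable (fun t => f' (φ t)) μ :=
  ((measurable_deriv f).comp hφ).aestronglyMeasurable.congr (hφs.mono fun _ ht => (hf _ ht).deriv)

theorem cor_midpoint_holder (I : Set ℝ) (hI : I.OrdConnected) (hIpos : I ⊆ Ioi (0:ℝ))
    (f f' : ℝ → ℝ) (a b : ℝ) (ha : a ∈ I) (hb : b ∈ I) (hab : a < b)
    (hf : ∀ x ∈ interior I, HasDerivAt f (f' x) x)
    (hint : IntervalIntegrable f' volume a b)
    (p q : ℝ) (hq : 1 < q) (hpq : 1 / p + 1 / q = 1)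
    (hconv : HarmonicallyConvexOn (Icc a b) (fun x => |f' x| ^ q)) :
    |f (2 * a * b / (a + b)) - (a * b / (b - a)) * (∫ x in a..b, f x / x ^ 2)| ≤
      (a * b * (b - a) / 2) *
      (C1p (0:ℝ) p a b ^ (1 / p) *
          ((|f' (2 * a * b / (a + b))| ^ q + |f' b| ^ q) / 4) ^ (1 / q)
        + C1p (0:ℝ) p b a ^ (1 / p) *
          ((|f' (2 * a * b / (a + b))| ^ q + |f' a| ^ q) / 4) ^ (1 / q)) := by
  have ha0 : 0 < a := hIpos ha
  have hb0 : 0 < b := ha0.trans hab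
  have hpq' : p.HolderConjugate q :=
    (Real.holderConjugate_iff.2 ⟨hq, by rw [add_comm]; simpa only [one_div] using hpq⟩).symm
  have hf_Ioo : ∀ x ∈ Ioo a b, HasDerivAt f (f' x) x := fun x hx =>
    hf x (interior_mono (hI.out ha hb) (by rwa [interior_Icc]))
  have hmeas : ∀ u v, (∀ t ∈ Ioo (0:ℝ) 1, harmonicInterp u v t ∈ Ioo a b) →
      AEStronglyMeasurable (fun t => f' (harmonicInterp u v t)) (volume.restrict (Ioc 0 (1 / 2))) :=
    fun u v h => aestronglyMeasurable_comp_of_hasDerivAt hf_Ioo measurable_harmonicInterp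
      (ae_restrict_of_forall_mem measurableSet_Ioc fun t ht => h t ⟨ht.1, by linarith [ht.2]⟩)
  have hJab := integral_mul_abs_comp_harmonicInterp_div_sq_le hpq' ha0 hb0
    (by rwa [uIcc_of_le hab.le]) (hmeas a b fun t ht => harmonicInterp_mem_Ioo ha0 hab ht)
  have hJba := integral_mul_abs_comp_harmonicInterp_div_sq_le hpq' hb0 ha0
    (by rwa [uIcc_of_ge hab.le]) (hmeas b a fun t ht => harmonicInterp_one_sub (t := t) ▸
      harmonicInterp_mem_Ioo ha0 hab ⟨by linarith [ht.2], by linarith [ht.1]⟩)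
  rw [harmonicInterp_half (by positivity)] at hJab hJba
  rw [show 2 * b * a / (b + a) = 2 * a * b / (a + b) by ring] at hJba
  calc _ ≤ _ := abs_apply_harmonicMean_sub_integral_le ha0 hab hf_Ioo hint
    _ ≤ _ := mul_le_mul_of_nonneg_left (add_le_add hJab hJba)
      (mul_nonneg (mul_pos ha0 hb0).le (sub_pos.2 hab).le)
    _ = _ := by ring
end MidpointIdentity
end

section
/- Let 0 < a < b, λ ∈ [0,1], q > 1 and 1/p + 1/q = 1. With H = 2ab/(a+b), G = √(ab), and A(x,y) = (x+y)/2, the following inequality holds: |(1−λ)·H² + λ·A(a²,b²) − G²| ≤ (ab(b−a)/2^{1/q})·{ C₁(λ,p;a,b)^{1/p}·A(H^q, b^q)^{1/q} + C₁(λ,p;b,a)^{1/p}·A(a^q, H^q)^{1/q} }. -/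
open MeasureTheory Set

/-!
Put `L(t) = t b + (1 - t) a` and `g(t) = (ab)² / L(t)²`, so that `g(0) = b²`, `g(1/2) = H²`,
`g(1) = a²` and `∫₀¹ g = ab = G²`. The left-hand side is the defect
`(1 - λ) g(1/2) + λ (g(0) + g(1))/2 - ∫₀¹ g`; it splits at `t = 1/2` into two halves, and the
second is the first with `a` and `b` exchanged, because `t ↦ g(1 - t)` is `g` for `(b, a)`.
Integrating by parts, the first half equals `∫₀^{1/2} (t - λ/2) g'(t) dt` with
`g' = -2(ab)²(b - a)/L³`. Hölder's inequality applied to `|λ - 2t|/L²` and `ab/L` produces `C₁`;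
and since `ab/L(t)` is a harmonic combination of `b` and `H`, it is at most `(1 - 2t) b + 2t H`,
so convexity of `x ↦ x^q` bounds `∫₀^{1/2} (ab/L)^q` by `(H^q + b^q)/4`.
-/

theorem ContinuousOn.memLp_restrict_of_isCompact {X E : Type*} [TopologicalSpace X]
    [MeasurableSpace X] [OpensMeasurableSpace X] [NormedAddCommGroup E]
    {μ : Measure X} [IsFiniteMeasureOnCompacts μ] {s : Set X} {f : X → E} {p : ENNReal}
    (hs : IsCompact s) (hs' : MeasurableSet s) (hf : ContinuousOn f s) :
    MemLp f p (μ.restrict s) := by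
  have : IsFiniteMeasure (μ.restrict s) := isFiniteMeasure_restrict.2 hs.measure_lt_top.ne
  obtain ⟨C, hC⟩ := hs.exists_bound_of_continuousOn hf
  exact MemLp.of_bound (hf.aestronglyMeasurable_of_isCompact hs hs') C
    ((ae_restrict_iff' hs').2 (ae_of_all _ hC))

theorem intervalIntegral.integral_mul_le_Lp_mul_Lq_of_nonneg {a b p q : ℝ} (hab : a ≤ b)
    (hpq : p.HolderConjugate q) {f g : ℝ → ℝ} (hf : ContinuousOn f (Icc a b))
    (hg : ContinuousOn g (Icc a b)) (hf0 : ∀ x ∈ Icc a b, 0 ≤ f x)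
    (hg0 : ∀ x ∈ Icc a b, 0 ≤ g x) :
    ∫ x in a..b, f x * g x ≤
      (∫ x in a..b, f x ^ p) ^ (1 / p) * (∫ x in a..b, g x ^ q) ^ (1 / q) := by
  simp only [intervalIntegral.integral_of_le hab, ← integral_Icc_eq_integral_Ioc]
  exact MeasureTheory.integral_mul_le_Lp_mul_Lq_of_nonneg hpq
    ((ae_restrict_iff' measurableSet_Icc).2 (ae_of_all _ hf0))
    ((ae_restrict_iff' measurableSet_Icc).2 (ae_of_all _ hg0))
    (hf.memLp_restrict_of_isCompact isCompact_Icc measurableSet_Icc)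
    (hg.memLp_restrict_of_isCompact isCompact_Icc measurableSet_Icc)

theorem Real.HolderConjugate.of_one_div_add_one_div {p q : ℝ} (hq : 1 < q)
    (hpq : 1 / p + 1 / q = 1) : p.HolderConjugate q := by
  have hq_inv : 0 < 1 / q ∧ 1 / q < 1 := ⟨by positivity, (div_lt_one (by linarith)).2 hq⟩
  have hp : 1 < p := by simpa using one_lt_one_div (a := 1 / p) (by linarith) (by linarith)
  exact Real.holderConjugate_iff.2 ⟨hp, by simpa only [one_div] using hpq⟩

section

variable {u v t : ℝ}

lemma lerp_pos (hu : 0 < u) (hv : 0 < v) (ht0 : 0 ≤ t) (ht1 : t ≤ 1) :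
    0 < t * v + (1 - t) * u := by
  nlinarith [lt_min hu hv, mul_le_mul_of_nonneg_left (min_le_right u v) ht0,
    mul_le_mul_of_nonneg_left (min_le_left u v) (sub_nonneg.2 ht1)]

lemma lerp_ne_zero_of_mem_Icc_zero_half (hu : 0 < u) (hv : 0 < v) :
    ∀ t ∈ Icc (0:ℝ) (1 / 2), t * v + (1 - t) * u ≠ 0 :=
  fun _ ht => (lerp_pos hu hv ht.1 (by linarith [ht.2])).ne'

lemma mul_div_lerp_le (hu : 0 < u) (hv : 0 < v) (ht0 : 0 ≤ t) (ht1 : t ≤ 1 / 2) :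
    u * v / (t * v + (1 - t) * u) ≤ (1 - 2 * t) * v + 2 * t * (2 * u * v / (u + v)) := by
  have huv : 0 < (u + v) / 2 := by positivity
  have h := (convexOn_zpow (-1)).2 (mem_Ioi.2 hu) (mem_Ioi.2 huv)
    (by linarith : 0 ≤ 1 - 2 * t) (by linarith : 0 ≤ 2 * t) (by ring)
  simp only [smul_eq_mul, zpow_neg_one] at h
  rw [show (1 - 2 * t) * u + 2 * t * ((u + v) / 2) = t * v + (1 - t) * u by ring] at h
  calc u * v / (t * v + (1 - t) * u) = u * v * (t * v + (1 - t) * u)⁻¹ := div_eq_mul_inv _ _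
    _ ≤ u * v * ((1 - 2 * t) * u⁻¹ + 2 * t * ((u + v) / 2)⁻¹) := by gcongr
    _ = (1 - 2 * t) * v + 2 * t * (2 * u * v / (u + v)) := by field_simp

lemma rpow_mul_div_lerp_le {q : ℝ} (hq : 1 ≤ q) (hu : 0 < u) (hv : 0 < v) (ht0 : 0 ≤ t)
    (ht1 : t ≤ 1 / 2) :
    (u * v / (t * v + (1 - t) * u)) ^ q ≤
      (1 - 2 * t) * v ^ q + 2 * t * (2 * u * v / (u + v)) ^ q := by
  have hL := lerp_pos hu hv ht0 (by linarith)
  calc (u * v / (t * v + (1 - t) * u)) ^ q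
      ≤ ((1 - 2 * t) * v + 2 * t * (2 * u * v / (u + v))) ^ q := by
        gcongr
        exact mul_div_lerp_le hu hv ht0 ht1
    _ ≤ (1 - 2 * t) * v ^ q + 2 * t * (2 * u * v / (u + v)) ^ q := by
        simpa only [smul_eq_mul] using (convexOn_rpow hq).2 (mem_Ici.2 hv.le)
          (mem_Ici.2 (by positivity)) (by linarith : 0 ≤ 1 - 2 * t) (by linarith : 0 ≤ 2 * t)
          (by ring)

lemma integral_rpow_mul_div_lerp_le {q : ℝ} (hq : 1 ≤ q) (hu : 0 < u) (hv : 0 < v) :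
    ∫ t in (0:ℝ)..1 / 2, (u * v / (t * v + (1 - t) * u)) ^ q ≤
      ((2 * u * v / (u + v)) ^ q + v ^ q) / 4 := by
  set H := 2 * u * v / (u + v)
  have hcont : ContinuousOn (fun t => (u * v / (t * v + (1 - t) * u)) ^ q) (Icc 0 (1 / 2)) :=
    ContinuousOn.rpow_const (p := q)
      (by fun_prop (disch := exact lerp_ne_zero_of_mem_Icc_zero_half hu hv))
      fun _ _ => Or.inr (by linarith)
  have haffine (t : ℝ) :
      (1 - 2 * t) * v ^ q + 2 * t * H ^ q = v ^ q + t * (2 * (H ^ q - v ^ q)) := by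
    ring
  calc ∫ t in (0:ℝ)..1 / 2, (u * v / (t * v + (1 - t) * u)) ^ q
      ≤ ∫ t in (0:ℝ)..1 / 2, ((1 - 2 * t) * v ^ q + 2 * t * H ^ q) :=
        intervalIntegral.integral_mono_on (by norm_num)
          (hcont.intervalIntegrable_of_Icc (by norm_num))
          (Continuous.intervalIntegrable (by fun_prop) _ _)
          fun t ht => rpow_mul_div_lerp_le hq hu hv ht.1 ht.2
    _ = (H ^ q + v ^ q) / 4 := by
        simp only [haffine]
        rw [intervalIntegral.integral_add intervalIntegrable_const
          (intervalIntegral.intervalIntegrable_id.mul_const _)]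
        simp only [intervalIntegral.integral_const, intervalIntegral.integral_mul_const,
          integral_id, smul_eq_mul]
        ring

lemma C1p_eq_integral_rpow {lam p : ℝ} (hu : 0 < u) (hv : 0 < v) :
    C1p lam p u v =
      ∫ t in (0:ℝ)..1 / 2, (|lam - 2 * t| / (t * v + (1 - t) * u) ^ 2) ^ p := by
  refine intervalIntegral.integral_congr fun t ht => ?_
  obtain ⟨ht0, ht1⟩ : t ∈ Icc (0:ℝ) (1 / 2) := by rwa [uIcc_of_le (by norm_num)] at ht
  have hL := lerp_pos hu hv ht0 (by linarith)
  rw [Real.div_rpow (abs_nonneg _) (by positivity), ← Real.rpow_natCast,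
    ← Real.rpow_mul hL.le, Nat.cast_ofNat]

lemma integral_abs_sub_div_lerp_pow_three_le {lam p q : ℝ} (hpq : p.HolderConjugate q)
    (hu : 0 < u) (hv : 0 < v) :
    ∫ t in (0:ℝ)..1 / 2, |lam - 2 * t| / (t * v + (1 - t) * u) ^ 3 ≤
      C1p lam p u v ^ (1 / p) * (((2 * u * v / (u + v)) ^ q + v ^ q) / 2) ^ (1 / q) /
        (u * v * 2 ^ (1 / q)) := by
  set H := 2 * u * v / (u + v)
  have hL : ∀ t ∈ Icc (0:ℝ) (1 / 2), 0 < t * v + (1 - t) * u :=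
    fun t ht => lerp_pos hu hv ht.1 (by linarith [ht.2])
  have hfactor : ∫ t in (0:ℝ)..1 / 2, |lam - 2 * t| / (t * v + (1 - t) * u) ^ 3 =
      (u * v)⁻¹ * ∫ t in (0:ℝ)..1 / 2,
        |lam - 2 * t| / (t * v + (1 - t) * u) ^ 2 * (u * v / (t * v + (1 - t) * u)) := by
    rw [← intervalIntegral.integral_const_mul]
    refine intervalIntegral.integral_congr fun t ht => ?_
    have := (hL t (by rwa [uIcc_of_le (by norm_num)] at ht)).ne'
    field_simp
  have hholder := intervalIntegral.integral_mul_le_Lp_mul_Lq_of_nonneg (by norm_num) hpq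
    (f := fun t => |lam - 2 * t| / (t * v + (1 - t) * u) ^ 2)
    (g := fun t => u * v / (t * v + (1 - t) * u))
    (ContinuousOn.div (by fun_prop) (by fun_prop) fun t ht => pow_ne_zero 2 (hL t ht).ne')
    (by fun_prop (disch := exact lerp_ne_zero_of_mem_Icc_zero_half hu hv))
    (fun t _ => by positivity) (fun t ht => (div_pos (mul_pos hu hv) (hL t ht)).le)
  have hLq : (∫ t in (0:ℝ)..1 / 2, (u * v / (t * v + (1 - t) * u)) ^ q) ^ (1 / q) ≤
      ((H ^ q + v ^ q) / 2) ^ (1 / q) / 2 ^ (1 / q) := by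
    rw [← Real.div_rpow (by positivity) (by norm_num), div_div]
    norm_num only
    exact Real.rpow_le_rpow (intervalIntegral.integral_nonneg (by norm_num)
      fun t ht => (Real.rpow_nonneg (div_pos (mul_pos hu hv) (hL t ht)).le _))
      (integral_rpow_mul_div_lerp_le hpq.symm.lt.le hu hv) hpq.symm.one_div_nonneg
  have hC1p_nonneg : 0 ≤ C1p lam p u v :=
    C1p_eq_integral_rpow hu hv ▸ intervalIntegral.integral_nonneg (by norm_num) fun t _ => by
      positivity
  rw [← C1p_eq_integral_rpow hu hv] at hholder
  rw [hfactor]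
  calc _ ≤ (u * v)⁻¹ *
        (C1p lam p u v ^ (1 / p) * ((H ^ q + v ^ q) / 2) ^ (1 / q) / 2 ^ (1 / q)) := by
        rw [mul_div_assoc]
        gcongr
        exact hholder.trans (by gcongr)
    _ = _ := by field_simp

lemma hasDerivAt_lerp (u v t : ℝ) : HasDerivAt (fun t => t * v + (1 - t) * u) (v - u) t :=
  (((hasDerivAt_id' t).mul_const v).add
    (((hasDerivAt_id' t).const_sub 1).mul_const u)).congr_deriv (by ring)

lemma hasDerivAt_div_lerp_sq (c : ℝ) (ht : t * v + (1 - t) * u ≠ 0) :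
    HasDerivAt (fun t => c / (t * v + (1 - t) * u) ^ 2)
      (-(2 * c * (v - u)) / (t * v + (1 - t) * u) ^ 3) t := by
  refine ((hasDerivAt_const t c).div ((hasDerivAt_lerp u v t).pow 2)
    (pow_ne_zero 2 ht)).congr_deriv ?_
  simp only [Pi.pow_apply]
  field_simp
  ring

lemma integral_div_lerp_sq (hu : 0 < u) (hv : 0 < v) :
    ∫ t in (0:ℝ)..1 / 2, (u * v) ^ 2 / (t * v + (1 - t) * u) ^ 2 = u * v ^ 2 / (u + v) := by
  have hL := lerp_ne_zero_of_mem_Icc_zero_half hu hv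
  rw [← uIcc_of_le (by norm_num : (0:ℝ) ≤ 1 / 2)] at hL
  have hprimitive : ∀ t ∈ uIcc (0:ℝ) (1 / 2),
      HasDerivAt (fun t => u * v ^ 2 * t / (t * v + (1 - t) * u))
        ((u * v) ^ 2 / (t * v + (1 - t) * u) ^ 2) t :=
    fun t ht => (((hasDerivAt_id' t).const_mul (u * v ^ 2)).div (hasDerivAt_lerp u v t)
      (hL t ht)).congr_deriv (by field_simp; ring)
  rw [intervalIntegral.integral_eq_sub_of_hasDerivAt hprimitive
    (ContinuousOn.intervalIntegrable
      (ContinuousOn.div (by fun_prop) (by fun_prop) fun t ht => pow_ne_zero 2 (hL t ht)))]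
  field_simp
  ring

/-- The defect `(1 - λ)/2 · g(1/2) + λ/2 · g(0) - ∫₀^{1/2} g` of `g(t) = (uv)²/(tv + (1 - t)u)²`
on the half interval `[0, 1/2]`. -/
noncomputable def halfDefect (lam u v : ℝ) : ℝ :=
  (1 - lam) / 2 * (2 * u * v / (u + v)) ^ 2 + lam / 2 * v ^ 2 - u * v ^ 2 / (u + v)

lemma halfDefect_eq_integral (lam : ℝ) (hu : 0 < u) (hv : 0 < v) :
    halfDefect lam u v =
      ∫ t in (0:ℝ)..1 / 2,
        (t - lam / 2) * (-(2 * (u * v) ^ 2 * (v - u)) / (t * v + (1 - t) * u) ^ 3) := by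
  have hL := lerp_ne_zero_of_mem_Icc_zero_half hu hv
  rw [← uIcc_of_le (by norm_num : (0:ℝ) ≤ 1 / 2)] at hL
  rw [intervalIntegral.integral_mul_deriv_eq_deriv_mul
    (fun t _ => (hasDerivAt_id' t).sub_const (lam / 2))
    (fun t ht => hasDerivAt_div_lerp_sq _ (hL t ht)) intervalIntegrable_const
    (ContinuousOn.intervalIntegrable
      (ContinuousOn.div (by fun_prop) (by fun_prop) fun t ht => pow_ne_zero 3 (hL t ht))),
    intervalIntegral.integral_congr (g := fun t => (u * v) ^ 2 / (t * v + (1 - t) * u) ^ 2)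
      (fun t _ => one_mul _), integral_div_lerp_sq hu hv, halfDefect]
  field_simp
  ring

lemma abs_halfDefect_le {lam p q : ℝ} (hpq : p.HolderConjugate q) (hu : 0 < u) (hv : 0 < v) :
    |halfDefect lam u v| ≤
      u * v * |v - u| / 2 ^ (1 / q) *
        (C1p lam p u v ^ (1 / p) * (((2 * u * v / (u + v)) ^ q + v ^ q) / 2) ^ (1 / q)) := by
  rw [halfDefect_eq_integral lam hu hv]
  calc _ ≤ ∫ t in (0:ℝ)..1 / 2,
        |(t - lam / 2) * (-(2 * (u * v) ^ 2 * (v - u)) / (t * v + (1 - t) * u) ^ 3)| :=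
        intervalIntegral.abs_integral_le_integral_abs (by norm_num)
    _ = (u * v) ^ 2 * |v - u| *
          ∫ t in (0:ℝ)..1 / 2, |lam - 2 * t| / (t * v + (1 - t) * u) ^ 3 := by
        rw [← intervalIntegral.integral_const_mul]
        refine intervalIntegral.integral_congr fun t ht => ?_
        obtain ⟨ht0, ht1⟩ : t ∈ Icc (0:ℝ) (1 / 2) := by rwa [uIcc_of_le (by norm_num)] at ht
        have hLt := lerp_pos hu hv ht0 (by linarith)
        have hlam : |t - lam / 2| = |lam - 2 * t| / 2 := by
          rw [abs_sub_comm, show lam - 2 * t = 2 * (lam / 2 - t) by ring, abs_mul, abs_two]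
          ring
        simp only [abs_mul, abs_div, abs_neg, abs_pow, hlam, abs_two, abs_of_pos hu,
          abs_of_pos hv, abs_of_pos hLt]
        field_simp
    _ ≤ (u * v) ^ 2 * |v - u| * (C1p lam p u v ^ (1 / p) *
          (((2 * u * v / (u + v)) ^ q + v ^ q) / 2) ^ (1 / q) / (u * v * 2 ^ (1 / q))) := by
        gcongr
        exact integral_abs_sub_div_lerp_pow_three_le hpq hu hv
    _ = _ := by field_simp

lemma defect_eq_halfDefect_add_halfDefect (lam : ℝ) (hu : 0 < u) (hv : 0 < v) :
    (1 - lam) * (2 * u * v / (u + v)) ^ 2 + lam * ((u ^ 2 + v ^ 2) / 2) -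
      Real.sqrt (u * v) ^ 2 =
      halfDefect lam u v + halfDefect lam v u := by
  rw [Real.sq_sqrt (mul_pos hu hv).le, halfDefect, halfDefect]
  field_simp
  ring

end

theorem prop_means5_general (a b : ℝ) (ha : 0 < a) (hab : a < b)
    (lam : ℝ)
    (p q : ℝ) (hq : 1 < q) (hpq : 1 / p + 1 / q = 1) :
    |(1 - lam) * (2 * a * b / (a + b)) ^ 2 + lam * ((a ^ 2 + b ^ 2) / 2) -
      Real.sqrt (a * b) ^ 2| ≤
      (a * b * (b - a) / (2:ℝ) ^ (1 / q)) *
        (C1p lam p a b ^ (1 / p) *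
            (((2 * a * b / (a + b)) ^ q + b ^ q) / 2) ^ (1 / q)
          + C1p lam p b a ^ (1 / p) *
            ((a ^ q + (2 * a * b / (a + b)) ^ q) / 2) ^ (1 / q)) := by
  have hb : 0 < b := ha.trans hab
  have hpq' := Real.HolderConjugate.of_one_div_add_one_div hq hpq
  rw [defect_eq_halfDefect_add_halfDefect lam ha hb]
  refine (abs_add_le _ _).trans ((add_le_add (abs_halfDefect_le hpq' ha hb)
    (abs_halfDefect_le hpq' hb ha)).trans_eq ?_)
  rw [abs_of_pos (sub_pos.2 hab), abs_of_neg (sub_neg.2 hab),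
    show 2 * b * a / (b + a) = 2 * a * b / (a + b) by ring, mul_comm b a, add_comm (a ^ q)]
  ring

theorem prop_means5 (a b : ℝ) (ha : 0 < a) (hab : a < b)
    (lam : ℝ) (hlam : lam ∈ Icc (0:ℝ) 1)
    (p q : ℝ) (hq : 1 < q) (hpq : 1 / p + 1 / q = 1) :
    |(1 - lam) * (2 * a * b / (a + b)) ^ 2 + lam * ((a ^ 2 + b ^ 2) / 2) -
      Real.sqrt (a * b) ^ 2| ≤
      (a * b * (b - a) / (2:ℝ) ^ (1 / q)) *
        (C1p lam p a b ^ (1 / p) *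
            (((2 * a * b / (a + b)) ^ q + b ^ q) / 2) ^ (1 / q)
          + C1p lam p b a ^ (1 / p) *
            ((a ^ q + (2 * a * b / (a + b)) ^ q) / 2) ^ (1 / q)) :=
  prop_means5_general a b ha hab lam p q hq hpq
end
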